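/- Fix x > 0 and for each n ≥ 3 let A_KS^{(n)}(x) be the n×n pairwise comparison matrix whose (1, n) entry is x, whose (n, 1) entry is 1/x, and all of whose remaining entries equal 1. Then the Consistency Index of this family tends to zero: lim_{n→∞} (ρ(A_KS^{(n)}(x)) − n)/(n − 1) = 0, where ρ denotes the spectral radius (Perron eigenvalue) of the matrix. -/

import Mathlib

/-!
Write `A = J + (x - 1) E₁ₙ + (1/x - 1) Eₙ₁`, where `J` is the all-ones matrix. All entries of `A`
are positive, so by Gershgorin's theorem every eigenvalue has modulus at most the largest row
sum, `n + |x - 1| + |1/x - 1|`. In the other direction, put `s = x + 1/x - 2 ≥ 0`. For a root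
`ρ ≥ n` of `(ρ - n)(ρ² + s) = (ρ - 2)s`, the vector
`(ρ² + s)𝟙 + (x - 1)(ρ + 1/x - 1)e₁ + (1/x - 1)(ρ + x - 1)eₙ` is an eigenvector for `ρ`.
Hence `0 ≤ ρ(A) - n ≤ |x - 1| + |1/x - 1|`, and the Consistency Index is `O(1/n)`.
-/

/-- The Koczkodaj–Szwarc matrix of order `n`: entry `(1, n)` equals `x`, entry
`(n, 1)` equals `1/x`, and all remaining entries equal `1`. -/
noncomputable def AKS (n : ℕ) (x : ℝ) : Matrix (Fin n) (Fin n) ℝ :=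
  fun i j =>
    if i.val = 0 ∧ j.val = n - 1 ∧ i ≠ j then x
    else if i.val = n - 1 ∧ j.val = 0 ∧ i ≠ j then 1 / x
    else 1

/-- The spectral radius of a real matrix: the maximum modulus of its complex
eigenvalues. -/
noncomputable def specRad {n : ℕ} (A : Matrix (Fin n) (Fin n) ℝ) : ℝ :=
  sSup ((‖·‖) '' spectrum ℂ (A.map Complex.ofReal))

namespace Matrix

variable {ι R K : Type*} [DecidableEq ι]

def onesAddSingles [AddMonoidWithOne R] (i j : ι) (α β : R) : Matrix ι ι R :=
  of (fun _ _ => 1) + single i j α + single j i β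

def onesAddSinglesEigenvector [CommRing R] (i j : ι) (α β ρ : R) : ι → R :=
  Function.const ι (ρ ^ 2 - α * β) + Pi.single i (α * (ρ + β)) + Pi.single j (β * (ρ + α))

variable [Fintype ι]

theorem onesAddSingles_mulVec [NonAssocSemiring R] (i j : ι) (α β : R) (v : ι → R) :
    onesAddSingles i j α β *ᵥ v =
      Function.const ι (∑ k, v k) + Pi.single i (α * v j) + Pi.single j (β * v i) := by
  rw [onesAddSingles, add_mulVec, add_mulVec, single_mulVec, single_mulVec,
    ← Pi.single, ← Pi.single]
  congr 2
  ext k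
  simp [mulVec, dotProduct]

section CharacteristicEquation

variable [CommRing R] {i j : ι} {α β ρ : R}
  (hρ : (ρ - Fintype.card ι) * (ρ ^ 2 - α * β) = ρ * (α + β) + 2 * α * β)
include hρ

theorem sum_onesAddSinglesEigenvector :
    ∑ k, onesAddSinglesEigenvector i j α β ρ k = ρ * (ρ ^ 2 - α * β) := by
  simp only [onesAddSinglesEigenvector, Pi.add_apply, Function.const_apply,
    Finset.sum_add_distrib, Finset.sum_pi_single', Finset.mem_univ, if_true, Finset.sum_const,
    Finset.card_univ, nsmul_eq_mul]
  linear_combination -hρ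

theorem onesAddSingles_mulVec_eigenvector (hij : i ≠ j) :
    onesAddSingles i j α β *ᵥ onesAddSinglesEigenvector i j α β ρ =
      ρ • onesAddSinglesEigenvector i j α β ρ := by
  rw [onesAddSingles_mulVec, sum_onesAddSinglesEigenvector hρ]
  ext k
  by_cases hki : k = i
  · subst hki; simp [onesAddSinglesEigenvector, hij]; ring
  by_cases hkj : k = j
  · subst hkj; simp [onesAddSinglesEigenvector, hki]; ring
  simp [onesAddSinglesEigenvector, hki, hkj]

end CharacteristicEquation

theorem mem_spectrum_of_mulVec_eq_smul [Field K] {A : Matrix ι ι K} {v : ι → K} {μ : K}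
    (hv : v ≠ 0) (h : A *ᵥ v = μ • v) : μ ∈ spectrum K A := by
  rw [← spectrum_toLin', ← Module.End.hasEigenvalue_iff_mem_spectrum]
  exact Module.End.hasEigenvalue_of_hasEigenvector
    ⟨Module.End.mem_eigenspace_iff.mpr (by rwa [toLin'_apply]), hv⟩

theorem mem_spectrum_onesAddSingles [Field K] {i j : ι} (hij : i ≠ j) {α β ρ : K}
    (hρ : (ρ - Fintype.card ι) * (ρ ^ 2 - α * β) = ρ * (α + β) + 2 * α * β)
    (hne : ρ * (ρ ^ 2 - α * β) ≠ 0) : ρ ∈ spectrum K (onesAddSingles i j α β) := by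
  refine mem_spectrum_of_mulVec_eq_smul (fun hw => hne ?_)
    (onesAddSingles_mulVec_eigenvector hρ hij)
  rw [← sum_onesAddSinglesEigenvector hρ, hw]
  simp

theorem map_mem_spectrum {L : Type*} [Field K] [Field L] (f : K →+* L) {A : Matrix ι ι K}
    {μ : K} (h : μ ∈ spectrum K A) : f μ ∈ spectrum L (A.map f) := by
  rw [mem_spectrum_iff_isRoot_charpoly, charpoly_map] at *
  exact h.map

theorem norm_le_of_mem_spectrum [NormedField K] {A : Matrix ι ι K} {μ : K} {r : ℝ}
    (hA : ∀ i, ∑ j, ‖A i j‖ ≤ r) (hμ : μ ∈ spectrum K A) : ‖μ‖ ≤ r := by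
  rw [← spectrum_toLin', ← Module.End.hasEigenvalue_iff_mem_spectrum] at hμ
  obtain ⟨k, hk⟩ := eigenvalue_mem_ball hμ
  rw [Metric.mem_closedBall, dist_eq_norm] at hk
  calc ‖μ‖ ≤ ‖A k k‖ + ‖μ - A k k‖ := norm_le_norm_add_norm_sub' μ (A k k)
    _ ≤ ‖A k k‖ + ∑ j ∈ Finset.univ.erase k, ‖A k j‖ := by gcongr
    _ = ∑ j, ‖A k j‖ := Finset.add_sum_erase _ (fun j => ‖A k j‖) (Finset.mem_univ k)
    _ ≤ r := hA k

end Matrix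

open Matrix

theorem exists_ge_and_sub_mul_sq_add_eq {m s : ℝ} (hm : 2 ≤ m) (hs : 0 ≤ s) :
    ∃ ρ, m ≤ ρ ∧ (ρ - m) * (ρ ^ 2 + s) = (ρ - 2) * s := by
  have hf : ContinuousOn (fun ρ : ℝ => (ρ - m) * (ρ ^ 2 + s) - (ρ - 2) * s)
      (Set.Icc m (m + s)) := by
    fun_prop
  obtain ⟨ρ, hρ, hρ0⟩ := intermediate_value_Icc (by linarith) hf
    (show (0 : ℝ) ∈ Set.Icc _ _ from ⟨by nlinarith, by nlinarith [sq_nonneg (m + s - 1)]⟩)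
  exact ⟨ρ, hρ.1, sub_eq_zero.mp hρ0⟩

theorem AKS_add_two_eq (n : ℕ) (x : ℝ) :
    AKS (n + 2) x = onesAddSingles 0 (Fin.last (n + 1)) (x - 1) (1 / x - 1) := by
  ext i j
  simp only [AKS, onesAddSingles, Matrix.add_apply, of_apply, single_apply, ne_eq, Fin.ext_iff,
    Fin.val_zero, Fin.val_last, Nat.add_succ_sub_one]
  split_ifs <;> first | omega | ring

theorem AKS_pos {n : ℕ} {x : ℝ} (hx : 0 < x) (i j : Fin n) : 0 < AKS n x i j := by
  unfold AKS
  split_ifs <;> positivity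

theorem exists_mem_spectrum_AKS_add_two (n : ℕ) {x : ℝ} (hx : 0 < x) :
    ∃ ρ : ℝ, n + 2 ≤ ρ ∧ (ρ : ℂ) ∈ spectrum ℂ ((AKS (n + 2) x).map Complex.ofReal) := by
  have hs : 0 ≤ x + 1 / x - 2 := by
    have : x + 1 / x - 2 = (x - 1) ^ 2 / x := by field_simp; ring
    rw [this]; positivity
  have hαβ : (x - 1) * (1 / x - 1) = -(x + 1 / x - 2) := by field_simp; ring
  obtain ⟨ρ, hnρ, hρ⟩ := exists_ge_and_sub_mul_sq_add_eq (m := n + 2) (by linarith) hs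
  have hρ_pos : 0 < ρ := by linarith
  refine ⟨ρ, hnρ, map_mem_spectrum Complex.ofRealHom ?_⟩
  rw [AKS_add_two_eq]
  refine mem_spectrum_onesAddSingles Fin.last_pos.ne ?_ ?_
  · rw [Fintype.card_fin, Nat.cast_add, Nat.cast_ofNat]
    linear_combination hρ - (ρ - (n + 2) + 2) * hαβ
  · rw [hαβ]
    exact (mul_pos hρ_pos (by nlinarith)).ne'

theorem norm_le_of_mem_spectrum_AKS_add_two (n : ℕ) {x : ℝ} (hx : 0 < x) {μ : ℂ}
    (hμ : μ ∈ spectrum ℂ ((AKS (n + 2) x).map Complex.ofReal)) :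
    ‖μ‖ ≤ n + 2 + (|x - 1| + |1 / x - 1|) := by
  refine norm_le_of_mem_spectrum (fun i => ?_) hμ
  have hrow : ∑ j, AKS (n + 2) x i j = (AKS (n + 2) x *ᵥ 1) i := by
    simp [mulVec, dotProduct]
  have hsingle (k : Fin (n + 2)) (a : ℝ) : (Pi.single k a : Fin (n + 2) → ℝ) i ≤ |a| := by
    rw [Pi.single_apply]
    split_ifs
    exacts [le_abs_self a, abs_nonneg a]
  simp only [map_apply, Complex.norm_real, Real.norm_eq_abs]
  simp_rw [abs_of_pos (AKS_pos hx i _)]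
  rw [hrow, AKS_add_two_eq, onesAddSingles_mulVec]
  simp only [Pi.add_apply, Function.const_apply, Pi.one_apply, mul_one, Finset.sum_const,
    Finset.card_univ, Fintype.card_fin, nsmul_eq_mul, Nat.cast_add, Nat.cast_ofNat]
  linarith [hsingle 0 (x - 1), hsingle (Fin.last (n + 1)) (1 / x - 1)]

theorem specRad_AKS_add_two_mem_Icc (n : ℕ) {x : ℝ} (hx : 0 < x) :
    specRad (AKS (n + 2) x) ∈ Set.Icc ((n : ℝ) + 2) (n + 2 + (|x - 1| + |1 / x - 1|)) := by
  obtain ⟨ρ, hnρ, hρ⟩ := exists_mem_spectrum_AKS_add_two n hx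
  have hbound : ∀ r ∈ (‖·‖) '' spectrum ℂ ((AKS (n + 2) x).map Complex.ofReal),
      r ≤ n + 2 + (|x - 1| + |1 / x - 1|) := by
    rintro _ ⟨μ, hμ, rfl⟩
    exact norm_le_of_mem_spectrum_AKS_add_two n hx hμ
  have hρ_mem : ρ ∈ (‖·‖) '' spectrum ℂ ((AKS (n + 2) x).map Complex.ofReal) :=
    ⟨ρ, hρ, by simp [abs_of_nonneg (by linarith : (0 : ℝ) ≤ ρ)]⟩
  exact ⟨hnρ.trans (le_csSup ⟨_, hbound⟩ hρ_mem), csSup_le ⟨ρ, hρ_mem⟩ hbound⟩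

/-- For any fixed `x > 0`, the Consistency Index of the Koczkodaj–Szwarc matrices
tends to zero: `lim_{n→∞} (ρ(A_KS^{(n)}(x)) − n)/(n − 1) = 0`. -/
theorem CI_AKS_tendsto_zero (x : ℝ) (hx : 0 < x) :
    Filter.Tendsto (fun n : ℕ => (specRad (AKS n x) - n) / ((n : ℝ) - 1))
      Filter.atTop (nhds 0) := by
  rw [← Filter.tendsto_add_atTop_iff_nat 2]
  have hupper := (Filter.tendsto_add_atTop_iff_nat 1).mpr
    (tendsto_const_div_atTop_nhds_zero_nat (|x - 1| + |1 / x - 1|))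
  refine tendsto_of_tendsto_of_tendsto_of_le_of_le tendsto_const_nhds hupper
    (fun n => ?_) (fun n => ?_)
  all_goals
    obtain ⟨hlo, hhi⟩ := specRad_AKS_add_two_mem_Icc n hx
    rw [Nat.cast_add, Nat.cast_ofNat, add_sub_assoc, show (2 : ℝ) - 1 = 1 by norm_num]
  · exact div_nonneg (by linarith) (by positivity)
  · rw [Nat.cast_add_one]
    exact div_le_div_of_nonneg_right (by linarith) (by positivity)
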